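/- arXiv:1312.4620 — 2 statements merged into one kernel-verified Lean document; each statement's English description precedes it below -/
import Mathlib

section
/- Let φ be the asymmetric Laplace density with parameter τ ∈ (0,1), let Z be a random variable, θ, θ_0 real numbers, and define the likelihood ratio R = φ(Z − (θ−θ_0))/φ(Z). Then: if θ − θ_0 ≥ 0, |R − 1| ≥ (1 − e^{−(θ−θ_0)(1−τ)})·1_{Z ≤ 0}; and if θ − θ_0 < 0, |R − 1| ≥ (1 − e^{(θ−θ_0)τ})·1_{Z > 0}. -/
open Real

/-- The check function `ρ_τ(z) = z(τ − 1_{z ≤ 0})`. -/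
noncomputable def checkFn (τ z : ℝ) : ℝ := z * (τ - if z ≤ 0 then 1 else 0)

/-- The asymmetric Laplace density `φ(z) = τ(1−τ)e^{−ρ_τ(z)}`. -/
noncomputable def ald (τ z : ℝ) : ℝ := τ * (1 - τ) * Real.exp (-(checkFn τ z))

/-! On the event in question `Z` and `Z − (θ − θ₀)` lie on the same side of `0`, so the check
function is linear there, `R = exp(ρ_τ(Z) − ρ_τ(Z − (θ − θ₀)))` is an explicit exponential, and
`|R − 1| ≥ 1 − R`. Off the event the indicator vanishes. -/

section CheckFn

variable {τ z : ℝ}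

theorem checkFn_of_nonpos (hz : z ≤ 0) : checkFn τ z = z * (τ - 1) := by
  simp [checkFn, hz]

theorem checkFn_of_pos (hz : 0 < z) : checkFn τ z = z * τ := by
  simp [checkFn, hz.not_ge]

end CheckFn

section Ratio

variable {τ : ℝ}

theorem ald_div_ald (hτ₀ : τ ≠ 0) (hτ₁ : τ ≠ 1) (a z : ℝ) :
    ald τ a / ald τ z = exp (checkFn τ z - checkFn τ a) := by
  have hc : τ * (1 - τ) ≠ 0 := mul_ne_zero hτ₀ (sub_ne_zero.mpr hτ₁.symm)
  rw [ald, ald, mul_div_mul_left _ _ hc, ← exp_sub]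
  ring_nf

theorem ald_sub_div_ald_of_nonpos (hτ₀ : τ ≠ 0) (hτ₁ : τ ≠ 1) {z δ : ℝ} (hz : z ≤ 0)
    (hδ : 0 ≤ δ) : ald τ (z - δ) / ald τ z = exp (-δ * (1 - τ)) := by
  rw [ald_div_ald hτ₀ hτ₁, checkFn_of_nonpos hz, checkFn_of_nonpos (by linarith)]
  ring_nf

theorem ald_sub_div_ald_of_pos (hτ₀ : τ ≠ 0) (hτ₁ : τ ≠ 1) {z δ : ℝ} (hz : 0 < z)
    (hδ : δ < 0) : ald τ (z - δ) / ald τ z = exp (δ * τ) := by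
  rw [ald_div_ald hτ₀ hτ₁, checkFn_of_pos hz, checkFn_of_pos (by linarith)]
  ring_nf

end Ratio

theorem one_sub_le_abs_sub_one (x : ℝ) : 1 - x ≤ |x - 1| :=
  abs_sub_comm x 1 ▸ le_abs_self _

/-- lower bounds on `|R − 1|` for the asymmetric Laplace likelihood ratio
`R = φ(Z − (θ−θ₀))/φ(Z)`. -/
theorem ald_likelihood_ratio_lower_bound
    (τ : ℝ) (hτ : τ ∈ Set.Ioo (0:ℝ) 1) (z θ θ₀ : ℝ) :
    (0 ≤ θ - θ₀ →
      (1 - Real.exp (-(θ - θ₀) * (1 - τ))) * (if z ≤ 0 then 1 else 0) ≤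
        |ald τ (z - (θ - θ₀)) / ald τ z - 1|) ∧
    (θ - θ₀ < 0 →
      (1 - Real.exp ((θ - θ₀) * τ)) * (if 0 < z then 1 else 0) ≤
        |ald τ (z - (θ - θ₀)) / ald τ z - 1|) := by
  have hτ₀ : τ ≠ 0 := hτ.1.ne'
  have hτ₁ : τ ≠ 1 := hτ.2.ne
  refine ⟨fun hδ => ?_, fun hδ => ?_⟩
  · split_ifs with hz
    · rw [mul_one, ald_sub_div_ald_of_nonpos hτ₀ hτ₁ hz hδ]
      exact one_sub_le_abs_sub_one _
    · rw [mul_zero]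
      exact abs_nonneg _
  · split_ifs with hz
    · rw [mul_one, ald_sub_div_ald_of_pos hτ₀ hτ₁ hz hδ]
      exact one_sub_le_abs_sub_one _
    · rw [mul_zero]
      exact abs_nonneg _
end

section
/- Let f_0 be the density on (0,1) whose distribution function is F_0(y) = 2y[1 − (−log(1 − 2^{−1/2}))^{−1/2}] for y ∈ (0,1/2] and F_0(y) = 1 − (−log(1 − y^{1/2}))^{−1/2} for y ∈ (1/2, 1). If Y_1, Y_2, ... are i.i.d. with distribution F_0 and M_n = max(Y_1,...,Y_n), then P(1 − M_n^{1/2} > e^{−n}) ≤ e^{−√n} for large n, and hence by Borel–Cantelli, almost surely 1 − M_n^{1/2} < e^{−n} for all sufficiently large n. -/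
open MeasureTheory Real Filter

/-- The distribution function `F₀` of the example. -/
noncomputable def F0 (y : ℝ) : ℝ :=
  if y ≤ 1/2 then
    2 * y * (1 - (-(Real.log (1 - (2:ℝ) ^ (-(1/2) : ℝ)))) ^ (-(1/2) : ℝ))
  else
    1 - (-(Real.log (1 - Real.sqrt y))) ^ (-(1/2) : ℝ)

/-- `Mmax Y n ω = max(Y₀ ω, ..., Y_{n-1} ω)` (for `n ≥ 1`). -/
noncomputable def Mmax {Ω : Type*} (Y : ℕ → Ω → ℝ) (n : ℕ) (ω : Ω) : ℝ :=
  (Finset.range n).fold max (Y 0 ω) fun i => Y i ω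

/-! The event `1 - √Mₙ ≥ e⁻ⁿ` is the event that all of `Y₀, …, Yₙ₋₁` are at most
`tₙ = (1 - e⁻ⁿ)²`. Since `e⁻ⁿ` is small, `tₙ` lies in the upper branch of `F₀`, where
`F₀(tₙ) = 1 - (-log e⁻ⁿ)^(-1/2) = 1 - n^(-1/2)`; by independence the event has probability
`(1 - n^(-1/2))ⁿ ≤ e^(-√n)`, which is summable, so Borel–Cantelli applies. -/

open ProbabilityTheory Finset

lemma exp_neg_le_one_fourth {x : ℝ} (hx : 2 ≤ x) : exp (-x) ≤ 1 / 4 := by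
  have h2 : 2 ≤ exp 1 := by linarith [add_one_le_exp (1 : ℝ)]
  have h4 : 4 ≤ exp x :=
    calc (4 : ℝ) ≤ exp 1 * exp 1 := by nlinarith
      _ = exp 2 := by rw [← exp_add]; norm_num
      _ ≤ exp x := exp_le_exp.2 hx
  rw [exp_neg, inv_le_comm₀ (exp_pos x) (by norm_num)]
  linarith

lemma F0_one_sub_exp_neg_sq {x : ℝ} (hx : 2 ≤ x) :
    F0 ((1 - exp (-x)) ^ 2) = 1 - (√x)⁻¹ := by
  have hε := exp_neg_le_one_fourth hx
  have hbranch : ¬ (1 - exp (-x)) ^ 2 ≤ 1 / 2 := by nlinarith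
  rw [F0, if_neg hbranch, sqrt_sq (by linarith), sub_sub_cancel, log_exp, neg_neg,
    rpow_neg (by linarith), ← sqrt_eq_rpow]

lemma one_sub_inv_sqrt_pow_le_exp_neg_sqrt (n : ℕ) : (1 - (√n)⁻¹) ^ n ≤ exp (-√n) := by
  have hsqrt : √(n : ℝ) ≤ n := by
    rcases n.eq_zero_or_pos with rfl | hn
    · simp
    · exact sqrt_le_self_iff.2 (Or.inr (by exact_mod_cast hn))
  simpa [sqrt_div_self'] using one_sub_div_pow_le_exp_neg hsqrt

lemma exp_neg_sqrt_le {x : ℝ} (hx : 0 < x) : exp (-√x) ≤ 24 * (x ^ 2)⁻¹ := by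
  have h := pow_div_factorial_le_exp (√x) (sqrt_nonneg x) 4
  rw [show √x ^ 4 = x ^ 2 by rw [show 4 = 2 * 2 from rfl, pow_mul, sq_sqrt hx.le],
    show ((Nat.factorial 4 : ℕ) : ℝ) = 24 by norm_num [Nat.factorial]] at h
  rw [exp_neg, inv_le_comm₀ (exp_pos _) (by positivity)]
  field_simp
  linarith

lemma summable_exp_neg_sqrt : Summable fun n : ℕ => exp (-√n) := by
  refine .of_norm_bounded_eventually_nat ((summable_nat_pow_inv.2 one_lt_two).mul_left 24) ?_
  filter_upwards [eventually_gt_atTop 0] with n hn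
  rw [norm_of_nonneg (exp_pos _).le]
  exact exp_neg_sqrt_le (by exact_mod_cast hn)

lemma ae_eventually_notMem_of_le_ofReal {α : Type*} [MeasurableSpace α] {μ : Measure α}
    [IsFiniteMeasure μ] {s : ℕ → Set α} {g : ℕ → ℝ} (hg : Summable g) (hg0 : ∀ n, 0 ≤ g n)
    (hs : ∀ᶠ n in atTop, μ (s n) ≤ ENNReal.ofReal (g n)) :
    ∀ᵐ x ∂μ, ∀ᶠ n in atTop, x ∉ s n := by
  have hreal : Summable fun n => μ.real (s n) := by
    refine .of_norm_bounded_eventually_nat hg (hs.mono fun n hn => ?_)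
    rw [norm_of_nonneg measureReal_nonneg]
    exact ENNReal.toReal_le_of_le_ofReal (hg0 n) hn
  refine ae_eventually_notMem ?_
  rw [tsum_congr fun n => (ofReal_measureReal (μ := μ) (s := s n)).symm,
    ← ENNReal.ofReal_tsum_of_nonneg (fun _ => measureReal_nonneg) hreal]
  exact ENNReal.ofReal_ne_top

lemma Mmax_le_iff {Ω : Type*} {Y : ℕ → Ω → ℝ} {n : ℕ} (hn : n ≠ 0) {ω : Ω} {t : ℝ} :
    Mmax Y n ω ≤ t ↔ ∀ i ∈ range n, Y i ω ≤ t := by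
  rw [Mmax, fold_max_le, and_iff_right_iff_imp]
  exact fun h => h 0 (mem_range.2 (Nat.pos_of_ne_zero hn))

section Maximum

variable {Ω : Type*} [MeasurableSpace Ω] {P : Measure Ω} {Y : ℕ → Ω → ℝ}

lemma measure_Mmax_le (hindep : iIndepFun Y P) {n : ℕ} (hn : n ≠ 0) (t : ℝ) :
    P {ω | Mmax Y n ω ≤ t} = ∏ i ∈ range n, P {ω | Y i ω ≤ t} := by
  have hset : {ω | Mmax Y n ω ≤ t} = ⋂ i ∈ range n, {ω | Y i ω ≤ t} := by
    ext ω
    simp only [Set.mem_iInter, Mmax_le_iff hn]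
    rfl
  rw [hset, hindep.meas_biInter (s := fun i => {ω | Y i ω ≤ t})
    fun i _ => ⟨Set.Iic t, measurableSet_Iic, rfl⟩]

lemma measure_exp_neg_le_one_sub_sqrt_Mmax_le (hindep : iIndepFun Y P)
    (hcdf : ∀ i, ∀ t ∈ Set.Ioo (0:ℝ) 1, P {ω | Y i ω ≤ t} = ENNReal.ofReal (F0 t))
    {n : ℕ} (hn : 2 ≤ n) :
    P {ω | exp (-(n:ℝ)) ≤ 1 - √(Mmax Y n ω)} ≤ ENNReal.ofReal (exp (-√n)) := by
  have hn' : (2 : ℝ) ≤ n := by exact_mod_cast hn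
  set t := (1 - exp (-(n:ℝ))) ^ 2
  have hε := exp_neg_le_one_fourth hn'
  have ht : t ∈ Set.Ioo (0:ℝ) 1 := by
    have := exp_pos (-(n:ℝ))
    constructor <;> nlinarith
  have hF0_nonneg : 0 ≤ 1 - (√(n:ℝ))⁻¹ :=
    sub_nonneg.2 (inv_le_one_of_one_le₀ (one_le_sqrt.2 (by linarith)))
  calc P {ω | exp (-(n:ℝ)) ≤ 1 - √(Mmax Y n ω)}
      ≤ P {ω | Mmax Y n ω ≤ t} :=
        measure_mono fun ω (hω : exp (-(n:ℝ)) ≤ 1 - √(Mmax Y n ω)) =>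
          (sqrt_le_iff.1 (le_sub_comm.1 hω)).2
    _ = ENNReal.ofReal (F0 t) ^ n := by
        rw [measure_Mmax_le hindep (by omega), prod_congr rfl fun i _ => hcdf i t ht,
          prod_const, card_range]
    _ = ENNReal.ofReal ((1 - (√(n:ℝ))⁻¹) ^ n) := by
        rw [F0_one_sub_exp_neg_sq hn', ENNReal.ofReal_pow hF0_nonneg]
    _ ≤ ENNReal.ofReal (exp (-√n)) :=
        ENNReal.ofReal_le_ofReal (one_sub_inv_sqrt_pow_le_exp_neg_sqrt n)

end Maximum

theorem max_tail_bound_and_borel_cantelli_general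
    {Ω : Type*} [MeasurableSpace Ω] (P : Measure Ω) [IsProbabilityMeasure P]
    (Y : ℕ → Ω → ℝ)
    (hindep : ProbabilityTheory.iIndepFun Y P)
    (hcdf : ∀ i, ∀ t ∈ Set.Ioo (0:ℝ) 1, P {ω | Y i ω ≤ t} = ENNReal.ofReal (F0 t)) :
    (∃ N : ℕ, ∀ n ≥ N, 1 ≤ n →
      P {ω | Real.exp (-(n:ℝ)) < 1 - Real.sqrt (Mmax Y n ω)} ≤
        ENNReal.ofReal (Real.exp (-Real.sqrt n))) ∧
    ∀ᵐ ω ∂P, ∀ᶠ n : ℕ in atTop, 1 - Real.sqrt (Mmax Y n ω) < Real.exp (-(n:ℝ)) := by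
  have htail : ∀ n : ℕ, 2 ≤ n →
      P {ω | exp (-(n:ℝ)) ≤ 1 - √(Mmax Y n ω)} ≤ ENNReal.ofReal (exp (-√n)) :=
    fun n hn => measure_exp_neg_le_one_sub_sqrt_Mmax_le hindep hcdf hn
  refine ⟨⟨2, fun n hn _ =>
    (htail n hn).trans' (measure_mono (Set.ofPred_subset_ofPred.2 fun _ => le_of_lt))⟩, ?_⟩
  filter_upwards [ae_eventually_notMem_of_le_ofReal summable_exp_neg_sqrt
    (fun n => (exp_pos _).le) (eventually_atTop.2 ⟨2, htail⟩)] with ω hω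
  exact hω.mono fun n hn => lt_of_not_ge hn

/-- for i.i.d. `Y₁, Y₂, …` with distribution function `F₀` and
`Mₙ = max(Y₁,…,Yₙ)`, one has `P(1 − √Mₙ > e^{−n}) ≤ e^{−√n}` for large `n`, and hence,
by Borel–Cantelli, almost surely `1 − √Mₙ < e^{−n}` for all sufficiently large `n`. -/
theorem max_tail_bound_and_borel_cantelli
    {Ω : Type*} [MeasurableSpace Ω] (P : Measure Ω) [IsProbabilityMeasure P]
    (Y : ℕ → Ω → ℝ) (hmeas : ∀ i, Measurable (Y i))
    (hindep : ProbabilityTheory.iIndepFun Y P)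
    (hcdf : ∀ i, ∀ t ∈ Set.Ioo (0:ℝ) 1, P {ω | Y i ω ≤ t} = ENNReal.ofReal (F0 t))
    (hsupp : ∀ i, ∀ᵐ ω ∂P, Y i ω ∈ Set.Ioo (0:ℝ) 1) :
    (∃ N : ℕ, ∀ n ≥ N, 1 ≤ n →
      P {ω | Real.exp (-(n:ℝ)) < 1 - Real.sqrt (Mmax Y n ω)} ≤
        ENNReal.ofReal (Real.exp (-Real.sqrt n))) ∧
    ∀ᵐ ω ∂P, ∀ᶠ n : ℕ in atTop, 1 - Real.sqrt (Mmax Y n ω) < Real.exp (-(n:ℝ)) :=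
  max_tail_bound_and_borel_cantelli_general P Y hindep hcdf
end
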